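/- arXiv:1304.5669 — 3 statements merged into one kernel-verified Lean document; each statement's English description precedes it below -/
import Mathlib

section
/- There is a parity-preserving bijection between standard Young tableaux of rectangular shape 2×r and lattice paths in an r×r grid staying weakly above the diagonal, such that the parity (as a permutation of {1,...,2r}) of the row reading word of the tableau equals the parity of the area above the corresponding lattice path. -/
/-!
Recording, for `k = 1, …, 2r`, a right step when `k` lies in the top row and a down step when it
lies in the bottom row turns a tableau into a path; the column condition becomes the ballot
condition, and the tableau is recovered by listing the right-step and the down-step times in
increasing order. Since both rows increase, an inversion of the reading word is exactly a pair
(top entry `y`, bottom entry `x`) with `x < y`, i.e. a down step followed by a later right step;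
these pairs are the unit squares above the path, so the inversion number equals the area.
-/

/-- Standard Young tableaux of rectangular shape `2 × r`, encoded as bijective fillings
`T : Fin 2 × Fin r → Fin (2r)` (entry `T (i, j)` is the entry in row `i`, column `j`,
with entries `0, ..., 2r-1` standing for `1, ..., 2r`) that increase along rows and
down columns. -/
def SYT2 (r : ℕ) : Finset ((Fin 2 × Fin r) → Fin (2 * r)) :=
  Finset.univ.filter (fun T => Function.Bijective T ∧
    (∀ i : Fin 2, ∀ j j' : Fin r, j < j' → T (i, j) < T (i, j')) ∧
    (∀ j : Fin r, T (0, j) < T (1, j)))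

/-- The row reading word of a `2 × r` tableau: the first row read left to right, followed by
the second row read left to right, regarded as a permutation of `Fin (2r)`. -/
def readWord {r : ℕ} (T : (Fin 2 × Fin r) → Fin (2 * r)) : Fin (2 * r) → Fin (2 * r) :=
  fun k =>
    if h : (k : ℕ) < r then T (0, ⟨k, h⟩)
    else T (1, ⟨(k : ℕ) - r, by have := k.isLt; omega⟩)

/-- The number of inversions of the reading word. -/
def invWord {r : ℕ} (T : (Fin 2 × Fin r) → Fin (2 * r)) : ℕ :=
  (Finset.univ.filter
    (fun p : Fin (2 * r) × Fin (2 * r) => p.1 < p.2 ∧ readWord T p.2 < readWord T p.1)).card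

/-- Dyck-type lattice paths in an `r × r` grid staying weakly above the diagonal. -/
def dyckSet (r : ℕ) : Finset (Fin (2 * r) → Bool) :=
  Finset.univ.filter (fun f =>
    (Finset.univ.filter (fun i => f i = true)).card = r ∧
    ∀ k : Fin (2 * r),
      (Finset.univ.filter (fun i => i ≤ k ∧ f i = false)).card ≤
        (Finset.univ.filter (fun i => i ≤ k ∧ f i = true)).card)

/-- The area above the path: number of pairs (down step, later right step). -/
def areaAbove {r : ℕ} (f : Fin (2 * r) → Bool) : ℕ :=
  (Finset.univ.filter
    (fun p : Fin (2 * r) × Fin (2 * r) => p.1 < p.2 ∧ f p.1 = false ∧ f p.2 = true)).card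

open Finset Function

theorem Finset.orderEmbOfFin_le_iff_lt_card_filter_le {α : Type*} [LinearOrder α]
    (s : Finset α) {k : ℕ} (h : #s = k) (j : Fin k) (y : α) :
    s.orderEmbOfFin h j ≤ y ↔ (j : ℕ) < #{x ∈ s | x ≤ y} := by
  set e := s.orderEmbOfFin h
  have hcard : #{x ∈ s | x ≤ y} = #{i | e i ≤ y} := by
    conv_lhs => rw [← s.map_orderEmbOfFin_univ h, filter_map, card_map]
    rfl
  rw [hcard]
  constructor
  · intro hj
    calc (j : ℕ) < #(Iic j) := by simp
      _ ≤ #{i | e i ≤ y} := card_le_card fun i hi => by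
        simp only [mem_Iic, mem_filter, mem_univ, true_and] at hi ⊢
        exact (e.monotone hi).trans hj
  · intro hj
    by_contra! hy
    have : #{i | e i ≤ y} ≤ #(Iio j) := card_le_card fun i hi => by
      simp only [mem_Iio, mem_filter, mem_univ, true_and] at hi ⊢
      exact e.lt_iff_lt.mp (hi.trans_lt hy)
    simp only [Fin.card_Iio] at this
    omega

namespace TwoRowTableau

variable {r : ℕ}

theorem mem_SYT2_iff {T : Fin 2 × Fin r → Fin (2 * r)} :
    T ∈ SYT2 r ↔ Bijective T ∧ (∀ i j j', j < j' → T (i, j) < T (i, j')) ∧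
      ∀ j, T (0, j) < T (1, j) := by
  simp [SYT2]

theorem decide_eq_zero_inj : ∀ {i i' : Fin 2}, decide (i = 0) = decide (i' = 0) ↔ i = i' := by
  decide

/-- Row `0` of a tableau corresponds to the right steps (`true`) of its path. -/
def rowSet (f : Fin (2 * r) → Bool) (i : Fin 2) : Finset (Fin (2 * r)) :=
  {k | f k = decide (i = 0)}

theorem mem_dyckSet_iff {f : Fin (2 * r) → Bool} :
    f ∈ dyckSet r ↔ #(rowSet f 0) = r ∧
      ∀ k, #{x ∈ rowSet f 1 | x ≤ k} ≤ #{x ∈ rowSet f 0 | x ≤ k} := by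
  simp [dyckSet, rowSet, filter_filter, and_comm]

theorem card_rowSet {f : Fin (2 * r) → Bool} (hf : f ∈ dyckSet r) (i : Fin 2) :
    #(rowSet f i) = r := by
  have h0 := (mem_dyckSet_iff.mp hf).1
  have hcompl : rowSet f 1 = (rowSet f 0)ᶜ := by ext; simp [rowSet]
  fin_cases i
  · exact h0
  · simp only [Fin.mk_one, hcompl, card_compl, Fintype.card_fin, h0]
    omega

def toPath (T : Fin 2 × Fin r → Fin (2 * r)) : Fin (2 * r) → Bool :=
  fun k => decide (∃ j, T (0, j) = k)

section toPath

variable {T : Fin 2 × Fin r → Fin (2 * r)}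

theorem toPath_apply (hT : Injective T) (c : Fin 2 × Fin r) :
    toPath T (T c) = decide (c.1 = 0) := by
  simp [toPath, hT.eq_iff, Prod.ext_iff, eq_comm]

theorem rowSet_toPath (hT : Bijective T) (i : Fin 2) :
    rowSet (toPath T) i =
      univ.map ⟨fun j => T (i, j), hT.1.comp (Prod.mk_right_injective i)⟩ := by
  ext k
  obtain ⟨c, rfl⟩ := hT.2 k
  simp only [rowSet, mem_filter, mem_univ, true_and, toPath_apply hT.1, decide_eq_zero_inj,
    mem_map, Embedding.coeFn_mk, hT.1.eq_iff, Prod.ext_iff]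
  exact ⟨fun h => ⟨c.2, h.symm, rfl⟩, fun ⟨_, h, _⟩ => h.symm⟩

theorem toPath_mem_dyckSet (hT : T ∈ SYT2 r) : toPath T ∈ dyckSet r := by
  obtain ⟨hbij, -, hcol⟩ := mem_SYT2_iff.mp hT
  have hrow (i : Fin 2) (k : Fin (2 * r)) :
      #{x ∈ rowSet (toPath T) i | x ≤ k} = #{j | T (i, j) ≤ k} := by
    rw [rowSet_toPath hbij, filter_map, card_map]
    rfl
  refine mem_dyckSet_iff.mpr ⟨by simp [rowSet_toPath hbij], fun k => ?_⟩
  rw [hrow, hrow]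
  exact card_le_card fun j hj => by
    simp only [mem_filter, mem_univ, true_and] at hj ⊢
    exact (hcol j).le.trans hj

end toPath

section ofPath

variable {f : Fin (2 * r) → Bool} (hf : f ∈ dyckSet r)

def ofPath : Fin 2 × Fin r → Fin (2 * r) :=
  fun c => (rowSet f c.1).orderEmbOfFin (card_rowSet hf c.1) c.2

theorem apply_ofPath (c : Fin 2 × Fin r) : f (ofPath hf c) = decide (c.1 = 0) :=
  (mem_filter.mp ((rowSet f c.1).orderEmbOfFin_mem _ c.2)).2

theorem ofPath_injective : Injective (ofPath hf) := by
  rintro ⟨i, j⟩ ⟨i', j'⟩ h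
  obtain rfl : i = i' :=
    decide_eq_zero_inj.mp (by rw [← apply_ofPath hf (i, j), h, apply_ofPath hf])
  exact congrArg (Prod.mk i) (((rowSet f i).orderEmbOfFin _).injective h)

theorem ofPath_zero_lt_ofPath_one (j : Fin r) : ofPath hf (0, j) < ofPath hf (1, j) := by
  refine lt_of_le_of_ne ?_ fun h => by simpa using ofPath_injective hf h
  have hbottom : (j : ℕ) < #{x ∈ rowSet f 1 | x ≤ ofPath hf (1, j)} :=
    ((rowSet f 1).orderEmbOfFin_le_iff_lt_card_filter_le _ j _).mp le_rfl
  exact ((rowSet f 0).orderEmbOfFin_le_iff_lt_card_filter_le _ j _).mpr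
    (hbottom.trans_le ((mem_dyckSet_iff.mp hf).2 _))

theorem ofPath_mem_SYT2 : ofPath hf ∈ SYT2 r :=
  mem_SYT2_iff.mpr
    ⟨(Fintype.bijective_iff_injective_and_card _).mpr ⟨ofPath_injective hf, by simp⟩,
    fun i _ _ h => ((rowSet f i).orderEmbOfFin _).strictMono h, ofPath_zero_lt_ofPath_one hf⟩

theorem toPath_ofPath : toPath (ofPath hf) = f := by
  funext k
  obtain ⟨c, rfl⟩ := (mem_SYT2_iff.mp (ofPath_mem_SYT2 hf)).1.2 k
  rw [toPath_apply (ofPath_injective hf), apply_ofPath hf]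

end ofPath

theorem ofPath_toPath {T : Fin 2 × Fin r → Fin (2 * r)} (hT : T ∈ SYT2 r) :
    ofPath (toPath_mem_dyckSet hT) = T := by
  obtain ⟨hbij, hrow, -⟩ := mem_SYT2_iff.mp hT
  funext ⟨i, j⟩
  refine (congrFun (orderEmbOfFin_unique _ (fun j => ?_) (hrow i)) j).symm
  rw [rowSet_toPath hbij]
  exact mem_map_of_mem _ (mem_univ j)

def equivDyckPath (r : ℕ) : {T // T ∈ SYT2 r} ≃ {f // f ∈ dyckSet r} where
  toFun T := ⟨toPath T.1, toPath_mem_dyckSet T.2⟩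
  invFun f := ⟨ofPath f.2, ofPath_mem_SYT2 f.2⟩
  left_inv T := Subtype.ext (ofPath_toPath T.2)
  right_inv f := Subtype.ext (toPath_ofPath f.2)

theorem readWord_finProdFinEquiv (T : Fin 2 × Fin r → Fin (2 * r)) (c : Fin 2 × Fin r) :
    readWord T (finProdFinEquiv c) = T c := by
  obtain ⟨i, j⟩ := c
  fin_cases i <;> simp [readWord]

/-- `finProdFinEquiv (i, j) = j + r * i` is the position of cell `(i, j)` in the reading word. -/
theorem finProdFinEquiv_lt_iff_of_apply_lt {T : Fin 2 × Fin r → Fin (2 * r)} (hT : T ∈ SYT2 r)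
    {c c' : Fin 2 × Fin r} (h : T c' < T c) :
    finProdFinEquiv c < finProdFinEquiv c' ↔ c.1 = 0 ∧ c'.1 ≠ 0 := by
  obtain ⟨-, hrow, -⟩ := mem_SYT2_iff.mp hT
  obtain ⟨i, j⟩ := c
  obtain ⟨i', j'⟩ := c'
  have hrow' := hrow i j j'
  simp only [Fin.lt_def, finProdFinEquiv_apply_val] at h hrow' ⊢
  fin_cases i <;> fin_cases i' <;> simp at h hrow' ⊢ <;> omega

theorem invWord_eq_areaAbove {T : Fin 2 × Fin r → Fin (2 * r)} (hT : T ∈ SYT2 r) :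
    invWord T = areaAbove (toPath T) := by
  obtain ⟨hbij, -, -⟩ := mem_SYT2_iff.mp hT
  let e : Fin 2 × Fin r ≃ Fin (2 * r) := finProdFinEquiv
  let E := Equiv.ofBijective T hbij
  calc invWord T = #{p : (Fin 2 × Fin r) × (Fin 2 × Fin r) | e p.1 < e p.2 ∧ T p.2 < T p.1} :=
        (card_equiv (e.prodCongr e) fun p => by simp [e, readWord_finProdFinEquiv]).symm
    _ = #{p : (Fin 2 × Fin r) × (Fin 2 × Fin r) |
          (p.1.1 = 0 ∧ p.2.1 ≠ 0) ∧ T p.2 < T p.1} :=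
        congrArg card <| filter_congr fun _ _ =>
          and_congr_left (finProdFinEquiv_lt_iff_of_apply_lt hT)
    _ = areaAbove (toPath T) :=
        card_equiv ((E.prodCongr E).trans (Equiv.prodComm _ _)) fun p => by
          simp [E, toPath_apply hbij.1, and_comm]

end TwoRowTableau

/-- There is a bijection between standard Young tableaux of shape `2 × r` and lattice paths
in an `r × r` grid staying weakly above the diagonal, under which the parity of the row
reading word of the tableau equals the parity of the area above the path. -/
theorem stmt1 (r : ℕ) :
    ∃ e : {T // T ∈ SYT2 r} ≃ {f // f ∈ dyckSet r},
      ∀ T : {T // T ∈ SYT2 r}, (Even (invWord T.1) ↔ Even (areaAbove (e T).1)) :=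
  ⟨TwoRowTableau.equivDyckPath r, fun T => by rw [TwoRowTableau.invWord_eq_areaAbove T.2]; rfl⟩
end

section
/- Let c ≥ 2 be even, m the identity of S_c, and n = c+1. Under the equivalence on S_n generated by cyclically permuting the letter-values of any contiguous increasing run of length c (i.e., replacing a contiguous factor whose standardization is a cyclic shift of the identity by another arrangement of the same letters whose standardization is a cyclic shift of the identity), all permutations of S_n that contain a contiguous factor of length c with standardization a cyclic shift of the identity form a single equivalence class. -/
/-- The standardization (order permutation) of a word with distinct letters. -/
def stdz (w : List ℕ) : List ℕ :=
  w.map (fun x => 1 + w.countP (fun y => decide (y < x)))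

/-- `u` is a cyclic shift of `m`. -/
def IsCyclicShiftOf (u m : List ℕ) : Prop := ∃ a ≤ m.length, u = m.rotate a

/-- One pattern-replacement move for the cyclic-shift relation attached to `m`. -/
def StepCyc (m : List ℕ) (φ ψ : List ℕ) : Prop :=
  ∃ a u v b : List ℕ, φ = a ++ u ++ b ∧ ψ = a ++ v ++ b ∧
    u.length = m.length ∧ u.Perm v ∧
    IsCyclicShiftOf (stdz u) m ∧ IsCyclicShiftOf (stdz v) m

/-- `w` contains a contiguous factor of length `|m|` whose standardization is a cyclic
shift of `m`. -/
def NonAvoider (m w : List ℕ) : Prop :=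
  ∃ i, i + m.length ≤ w.length ∧
    IsCyclicShiftOf (stdz ((w.drop i).take m.length)) m

/-!
A non-avoider of `S_{c+1}` has its factor of length `c` at one end; that factor uses all letters
but one, `y`, and one move rearranges it into the cyclic order of the letters `≠ y`, which turns
the word into a cyclic shift `rotId (c + 1) j` of the identity. Two moves join the shifts by `j`
and `j + 2`: rotating the last `c` letters of the shift starting with `x` by one step gives a word
ending in `x + 1` whose first `c` letters are again in cyclic order. Since `c + 1` is odd, `2`
generates `ℤ / (c + 1)`, so all cyclic shifts, and hence all non-avoiders, are equivalent.
-/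

theorem countP_lt_range' (a l z : ℕ) :
    (List.range' a l).countP (· < z) = min l (z - a) := by
  induction l generalizing a with
  | zero => simp
  | succ l ih =>
    rw [List.range'_succ, List.countP_cons, ih]
    by_cases h : a < z <;> simp [h] <;> omega

theorem rotate_range' (a l k : ℕ) (hk : k ≤ l) :
    (List.range' a l).rotate k = List.range' (a + k) (l - k) ++ List.range' a k := by
  conv_lhs => rw [← Nat.add_sub_cancel' hk, ← List.range'_append_1]
  simpa using List.rotate_append_length_eq (List.range' a k) (List.range' (a + k) (l - k))

theorem stdz_map_of_strictMono {f : ℕ → ℕ} (hf : StrictMono f) (w : List ℕ) :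
    stdz (w.map f) = stdz w := by
  simp only [stdz, List.map_map, List.countP_map]
  congr 1; funext x; simp [Function.comp_def, hf.lt_iff_lt]

theorem stdz_rotate (w : List ℕ) (k : ℕ) : stdz (w.rotate k) = (stdz w).rotate k := by
  simp only [stdz, List.map_rotate, (List.rotate_perm w k).countP_eq]

theorem stdz_range' (a l : ℕ) : stdz (List.range' a l) = List.range' 1 l := by
  refine List.ext_getElem (by simp [stdz]) fun i h _ => ?_
  simp only [stdz, List.length_map, List.length_range'] at h
  simp [stdz, countP_lt_range']
  omega

theorem isCyclicShiftOf_rotate (l : List ℕ) (k : ℕ) : IsCyclicShiftOf (l.rotate k) l := by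
  rcases eq_or_ne l [] with rfl | hl
  · exact ⟨0, le_rfl, by simp⟩
  · exact ⟨k % l.length, (Nat.mod_lt _ (List.length_pos_of_ne_nil hl)).le,
      (List.rotate_mod l k).symm⟩

theorem stepCyc_of_perm {m a u v b : List ℕ} (hlen : u.length = m.length)
    (huv : (a ++ u ++ b).Perm (a ++ v ++ b))
    (hu : IsCyclicShiftOf (stdz u) m) (hv : IsCyclicShiftOf (stdz v) m) :
    StepCyc m (a ++ u ++ b) (a ++ v ++ b) :=
  ⟨a, u, v, b, rfl, rfl, hlen,
    (List.perm_append_left_iff a).mp ((List.perm_append_right_iff b).mp huv), hu, hv⟩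

def rotId (n j : ℕ) : List ℕ := (List.range' 1 n).rotate j

theorem rotId_mod (n j : ℕ) : rotId n (j % n) = rotId n j := by
  simpa [rotId] using List.rotate_mod (List.range' 1 n) j

theorem rotId_add_mul_self (n j t : ℕ) : rotId n (j + n * t) = rotId n j := by
  rw [← rotId_mod, Nat.add_mul_mod_self_left, rotId_mod]

def succAbove (y i : ℕ) : ℕ := if i < y then i else i + 1

theorem strictMono_succAbove (y : ℕ) : StrictMono (succAbove y) := by
  intro i j h; unfold succAbove; split_ifs <;> omega

theorem map_succAbove_range'_of_le {y a l : ℕ} (h : a + l ≤ y) :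
    (List.range' a l).map (succAbove y) = List.range' a l := by
  refine List.ext_getElem (by simp) fun i h₁ _ => ?_
  simp only [List.length_map, List.length_range'] at h₁
  simp [succAbove]; omega

theorem map_succAbove_range'_of_ge {y a l : ℕ} (h : y ≤ a) :
    (List.range' a l).map (succAbove y) = List.range' (a + 1) l := by
  refine List.ext_getElem (by simp) fun i h₁ _ => ?_
  simp only [List.length_map, List.length_range'] at h₁
  simp [succAbove, show ¬ a + i < y by omega]; omega

/-- The cyclic shift `rotId c k` of the identity of `S_c`, written in the letters
`{1, …, c + 1} \ {y}`. -/
def gapRot (c y k : ℕ) : List ℕ := (rotId c k).map (succAbove y)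

theorem length_gapRot (c y k : ℕ) : (gapRot c y k).length = c := by simp [gapRot, rotId]

theorem stdz_gapRot (c y k : ℕ) : stdz (gapRot c y k) = rotId c k := by
  rw [gapRot, stdz_map_of_strictMono (strictMono_succAbove y), rotId, stdz_rotate, stdz_range']

theorem isCyclicShiftOf_stdz_gapRot (c y k : ℕ) :
    IsCyclicShiftOf (stdz (gapRot c y k)) (List.range' 1 c) := by
  rw [stdz_gapRot]; exact isCyclicShiftOf_rotate _ _

theorem gapRot_perm (c y k k' : ℕ) : (gapRot c y k).Perm (gapRot c y k') :=
  ((List.rotate_perm _ k).trans (List.rotate_perm _ k').symm).map _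

theorem stepCyc_gapRot (a b : List ℕ) (c y k k' : ℕ) :
    StepCyc (List.range' 1 c) (a ++ gapRot c y k ++ b) (a ++ gapRot c y k' ++ b) :=
  stepCyc_of_perm (by simp [length_gapRot]) (((gapRot_perm c y k k').append_left a).append_right b)
    (isCyclicShiftOf_stdz_gapRot c y k) (isCyclicShiftOf_stdz_gapRot c y k')

theorem gapRot_succ_self {c x : ℕ} (hx : x ≤ c) :
    gapRot c (x + 1) x = List.range' (x + 2) (c - x) ++ List.range' 1 x := by
  rw [gapRot, rotId, rotate_range' 1 c x hx, List.map_append,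
    map_succAbove_range'_of_ge (by omega), map_succAbove_range'_of_le (by omega)]
  grind

/-! The identities below are stated in the shape `a ++ u ++ b` of a move, with `u` of length `c`. -/

theorem rotId_eq_cons_gapRot {c x : ℕ} (hx : x ≤ c) :
    rotId (c + 1) x = [x + 1] ++ gapRot c (x + 1) x ++ [] := by
  rw [rotId, rotate_range' 1 (c + 1) x (by omega), gapRot_succ_self hx,
    show c + 1 - x = c - x + 1 by omega, List.range'_succ]
  grind

theorem rotId_succ_eq_gapRot_concat {c x : ℕ} (hx : x ≤ c) :
    rotId (c + 1) (x + 1) = [] ++ gapRot c (x + 1) x ++ [x + 1] := by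
  rw [rotId, rotate_range' 1 (c + 1) (x + 1) (by omega), gapRot_succ_self hx, List.range'_concat]
  grind

theorem cons_gapRot_succ_eq_concat {c x : ℕ} (hx : x + 1 ≤ c) :
    [x + 1] ++ gapRot c (x + 1) (x + 1) ++ [] = [] ++ gapRot c (x + 2) x ++ [x + 2] := by
  rw [gapRot, gapRot, rotId, rotId, rotate_range' 1 c (x + 1) hx, rotate_range' 1 c x (by omega),
    show c - x = c - (x + 1) + 1 by omega, List.range'_succ (s := 1 + x),
    List.range'_concat (s := 1) (n := x)]
  simp (disch := omega) only [List.map_append, List.map_cons, List.map_nil,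
    map_succAbove_range'_of_ge, map_succAbove_range'_of_le, succAbove, if_pos, if_neg]
  grind

theorem cons_gapRot_last_eq_concat (c : ℕ) :
    [c + 1] ++ gapRot c (c + 1) (c + 1) ++ [] = [] ++ gapRot c 1 (c - 1) ++ [1] := by
  rcases c with _ | d
  · rfl
  have hwrap : (List.range' 1 (d + 1)).rotate (d + 1 + 1) = (List.range' 1 (d + 1)).rotate 1 := by
    rw [← List.rotate_mod, ← List.rotate_mod _ 1]; simp
  rw [gapRot, gapRot, rotId, rotId, hwrap, rotate_range' 1 (d + 1) 1 (by omega),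
    rotate_range' 1 (d + 1) (d + 1 - 1) (by omega)]
  simp (disch := omega) only [List.map_append, map_succAbove_range'_of_ge,
    map_succAbove_range'_of_le]
  grind

section

variable {c : ℕ}

theorem rotId_eqvGen_add_two_of_le {x : ℕ} (hx : x ≤ c) :
    Relation.EqvGen (StepCyc (List.range' 1 c)) (rotId (c + 1) x) (rotId (c + 1) (x + 2)) := by
  have hbridge := stepCyc_gapRot [x + 1] [] c (x + 1) x (x + 1)
  rw [← rotId_eq_cons_gapRot hx] at hbridge
  refine (Relation.EqvGen.rel _ _ hbridge).trans _ _ _ (Relation.EqvGen.rel _ _ ?_)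
  rcases Nat.lt_or_ge x c with hxc | hxc
  · rw [cons_gapRot_succ_eq_concat hxc, rotId_succ_eq_gapRot_concat hxc]
    exact stepCyc_gapRot [] [x + 2] c (x + 2) x (x + 1)
  · obtain rfl : c = x := le_antisymm hxc hx
    rw [cons_gapRot_last_eq_concat, show c + 2 = 0 + 1 + (c + 1) * 1 by ring, rotId_add_mul_self,
      rotId_succ_eq_gapRot_concat (Nat.zero_le c)]
    exact stepCyc_gapRot [] [1] c 1 (c - 1) 0

theorem rotId_eqvGen_add_two (j : ℕ) :
    Relation.EqvGen (StepCyc (List.range' 1 c)) (rotId (c + 1) j) (rotId (c + 1) (j + 2)) := by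
  have h := rotId_eqvGen_add_two_of_le (Nat.lt_succ_iff.mp (Nat.mod_lt j c.succ_pos))
  rwa [rotId_mod, ← rotId_mod _ (_ + 2), Nat.mod_add_mod, rotId_mod] at h

theorem rotId_eqvGen_zero (hc : Even c) (j : ℕ) :
    Relation.EqvGen (StepCyc (List.range' 1 c)) (rotId (c + 1) 0) (rotId (c + 1) j) := by
  have heven (t : ℕ) :
      Relation.EqvGen (StepCyc (List.range' 1 c)) (rotId (c + 1) 0) (rotId (c + 1) (2 * t)) := by
    induction t with
    | zero => exact Relation.EqvGen.refl _
    | succ t ih => exact ih.trans _ _ _ (rotId_eqvGen_add_two _)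
  obtain ⟨s, rfl⟩ := hc
  have h := heven (j * (s + 1))
  rwa [show 2 * (j * (s + 1)) = j + (s + s + 1) * j by ring, rotId_add_mul_self] at h

theorem stepCyc_rotId_of_perm {a u b : List ℕ} {j y k : ℕ} (hlen : u.length = c)
    (hu : IsCyclicShiftOf (stdz u) (List.range' 1 c))
    (hw : (a ++ u ++ b).Perm (List.range' 1 (c + 1)))
    (hj : rotId (c + 1) j = a ++ gapRot c y k ++ b) :
    StepCyc (List.range' 1 c) (a ++ u ++ b) (rotId (c + 1) j) := by
  rw [hj]
  refine stepCyc_of_perm (by simpa using hlen) ?_ hu (isCyclicShiftOf_stdz_gapRot c y k)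
  rw [← hj]
  exact hw.trans (List.rotate_perm _ _).symm

theorem exists_eqvGen_rotId_of_nonAvoider {w : List ℕ} (hw : w.Perm (List.range' 1 (c + 1)))
    (hnw : NonAvoider (List.range' 1 c) w) :
    ∃ j, Relation.EqvGen (StepCyc (List.range' 1 c)) w (rotId (c + 1) j) := by
  have hlen : w.length = c + 1 := by simpa using hw.length_eq
  have hletter {y : ℕ} (hy : y ∈ w) : ∃ x ≤ c, y = x + 1 := by
    have := List.mem_range'_1.mp (hw.subset hy)
    exact ⟨y - 1, by omega, by omega⟩
  obtain ⟨i, hi, hcyc⟩ := hnw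
  simp only [List.length_range', hlen] at hi hcyc
  obtain rfl | rfl : i = 0 ∨ i = 1 := by omega
  · obtain rfl | ⟨u, y, rfl⟩ := w.eq_nil_or_concat'
    · simp at hlen
    obtain ⟨x, hx, rfl⟩ := hletter (y := y) (by simp)
    have hu : u.length = c := by simpa using hlen
    refine ⟨x + 1, Relation.EqvGen.rel _ _ ?_⟩
    simpa using stepCyc_rotId_of_perm (a := []) hu (by simpa [← hu] using hcyc)
      (by simpa using hw) (rotId_succ_eq_gapRot_concat hx)
  · obtain _ | ⟨y, u⟩ := w
    · simp at hlen
    obtain ⟨x, hx, rfl⟩ := hletter (y := y) (by simp)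
    have hu : u.length = c := by simpa using hlen
    refine ⟨x, Relation.EqvGen.rel _ _ ?_⟩
    simpa using stepCyc_rotId_of_perm (b := []) hu (by simpa [← hu] using hcyc)
      (by simpa using hw) (rotId_eq_cons_gapRot hx)

end

theorem stmt4_general (c : ℕ) (hce : Even c) (w v : List ℕ)
    (hw : w.Perm (List.range' 1 (c + 1))) (hv : v.Perm (List.range' 1 (c + 1)))
    (hnw : NonAvoider (List.range' 1 c) w) (hnv : NonAvoider (List.range' 1 c) v) :
    Relation.EqvGen (StepCyc (List.range' 1 c)) w v := by
  have E := Relation.EqvGen.is_equivalence (StepCyc (List.range' 1 c))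
  obtain ⟨j, hwj⟩ := exists_eqvGen_rotId_of_nonAvoider hw hnw
  obtain ⟨j', hvj'⟩ := exists_eqvGen_rotId_of_nonAvoider hv hnv
  exact E.trans (E.trans hwj (E.symm (rotId_eqvGen_zero hce j)))
    (E.trans (rotId_eqvGen_zero hce j') (E.symm hvj'))

/-- For even `c` and `m` the identity of `S_c`, all non-avoiders of `S_{c+1}` form a single
equivalence class under the cyclic-shift replacement relation. -/
theorem stmt4 (c : ℕ) (hc : 2 ≤ c) (hce : Even c) (w v : List ℕ)
    (hw : w.Perm (List.range' 1 (c + 1))) (hv : v.Perm (List.range' 1 (c + 1)))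
    (hnw : NonAvoider (List.range' 1 c) w) (hnv : NonAvoider (List.range' 1 c) v) :
    Relation.EqvGen (StepCyc (List.range' 1 c)) w v :=
  stmt4_general c hce w v hw hv hnw hnv
end

section
/- Fix an odd integer c ≥ 3 and n even with n > c, and let the 'hit' pattern set be the cyclic shifts of the identity of S_c. Then the number of even permutations in S_n containing at least one contiguous factor of length c whose standardization is a cyclic shift of the identity equals the number of odd such permutations. -/
/-- The number of inversions of a word. -/
def inv (w : List ℕ) : ℕ :=
  ((Finset.range w.length ×ˢ Finset.range w.length).filter
    (fun p => p.1 < p.2 ∧ w.getD p.2 0 < w.getD p.1 0)).card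

/-- Boolean test: `u` is a cyclic shift of `m`. -/
def isCycShiftB (u m : List ℕ) : Bool :=
  (List.range (m.length + 1)).any (fun a => u == m.rotate a)

/-- Boolean test: the contiguous factor of `w` of length `c` starting at (0-indexed)
position `i` is a hit, i.e. its standardization is a cyclic shift of the identity of `S_c`. -/
def hitAtB (c : ℕ) (w : List ℕ) (i : ℕ) : Bool :=
  decide (i + c ≤ w.length) && isCycShiftB (stdz ((w.drop i).take c)) (List.range' 1 c)

/-- Boolean test: `w` is a non-avoider (has at least one hit). -/
def hasHitB (c : ℕ) (w : List ℕ) : Bool :=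
  (List.range (w.length + 1)).any (hitAtB c w)

/-! Adding 1 modulo `n` to every letter, `w ↦ (2 3 ⋯ n 1) ∘ w`, permutes `S_n`. It preserves
hits: the standardization of a factor avoiding the letter `n` is unchanged, and that of a factor
containing `n` is shifted by the same rule modulo `c`, so it stays a cyclic shift of the identity.
It turns the letter `n` at position `k` into `1`, which trades the `n - 1 - k` inversions of `n`
for `k` new ones; as `n` is even, this flips the parity of the inversion count. -/
namespace List

theorem countP_eq_sum_range (l : List ℕ) (p : ℕ → Bool) :
    l.countP p = ∑ j ∈ Finset.range l.length, if p (l.getD j 0) then 1 else 0 := by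
  induction l with
  | nil => simp
  | cons a l ih =>
    rw [countP_cons, ih, length_cons, Finset.sum_range_succ']
    simp only [getD_cons_succ, getD_cons_zero]

theorem countP_or_beq_of_nodup {α : Type*} [DecidableEq α] {l : List α} {p : α → Bool} {a : α}
    (hl : l.Nodup) (ha : a ∈ l) (hpa : p a = false) :
    l.countP (fun y => p y || y == a) = l.countP p + 1 := by
  induction l with
  | nil => simp at ha
  | cons b l ih =>
    obtain ⟨hbl, hl⟩ := nodup_cons.mp hl
    rcases eq_or_ne b a with rfl | hba
    · have : l.countP (fun y => p y || y == b) = l.countP p :=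
        countP_congr fun y hy => by simp [ne_of_mem_of_not_mem hy hbl]
      simp [hpa, this]
    · have ha : a ∈ l := (mem_cons.mp ha).resolve_left hba.symm
      simp only [countP_cons, ih hl ha, Bool.or_eq_true, beq_iff_eq, hba, or_false]
      omega

theorem countP_map_lt_of_strictMonoOn {α β : Type*} [LinearOrder α] [LinearOrder β]
    {f : α → β} {s : Set α} {l : List α} {x : α} (hf : StrictMonoOn f s) (hl : ∀ y ∈ l, y ∈ s)
    (hx : x ∈ s) :
    (l.map f).countP (fun y => decide (y < f x)) = l.countP (fun y => decide (y < x)) := by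
  rw [countP_map]
  exact countP_congr fun y hy => by simp [hf.lt_iff_lt (hl y hy) hx]

theorem eq_of_map_eq_of_injOn {α β : Type*} {f : α → β} {s : Set α} (hf : Set.InjOn f s) :
    ∀ {l l' : List α}, (∀ x ∈ l, x ∈ s) → (∀ x ∈ l', x ∈ s) → l.map f = l'.map f → l = l'
  | [], [], _, _, _ => rfl
  | a :: l, a' :: l', hl, hl', h => by
    simp only [map_cons, cons.injEq] at h
    obtain ⟨ha, h⟩ := h
    simp only [mem_cons, forall_eq_or_imp] at hl hl'
    rw [hf hl.1 hl'.1 ha, eq_of_map_eq_of_injOn hf hl.2 hl'.2 h]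

theorem IsRotated.of_map_of_injOn {α β : Type*} {f : α → β} {s : Set α} {l l' : List α}
    (hf : Set.InjOn f s) (hl : ∀ x ∈ l, x ∈ s) (hl' : ∀ x ∈ l', x ∈ s)
    (h : l.map f ~r l'.map f) : l ~r l' := by
  obtain ⟨k, hk⟩ := h
  refine ⟨k, eq_of_map_eq_of_injOn hf (fun x hx => hl x (mem_rotate.mp hx)) hl' ?_⟩
  rwa [map_rotate]

end List

theorem inv_eq_sum (w : List ℕ) :
    inv w = ∑ i ∈ Finset.range w.length, ∑ j ∈ Finset.range w.length,
      if i < j ∧ w.getD j 0 < w.getD i 0 then 1 else 0 := by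
  rw [inv, Finset.card_filter, Finset.sum_product]

theorem inv_cons (a : ℕ) (l : List ℕ) :
    inv (a :: l) = l.countP (fun y => decide (y < a)) + inv l := by
  rw [inv_eq_sum, inv_eq_sum, List.countP_eq_sum_range, List.length_cons,
    Finset.sum_range_succ']
  simp only [Finset.sum_range_succ', List.getD_cons_succ, List.getD_cons_zero]
  simp [add_comm]

theorem inv_map_of_strictMonoOn {f : ℕ → ℕ} {s : Set ℕ} (hf : StrictMonoOn f s) :
    ∀ {w : List ℕ}, (∀ x ∈ w, x ∈ s) → inv (w.map f) = inv w
  | [], _ => rfl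
  | a :: l, hw => by
    simp only [List.mem_cons, forall_eq_or_imp] at hw
    rw [List.map_cons, inv_cons, inv_cons, List.countP_map_lt_of_strictMonoOn hf hw.2 hw.1,
      inv_map_of_strictMonoOn hf hw.2]

theorem stdz_map_of_strictMonoOn {f : ℕ → ℕ} {s : Set ℕ} {u : List ℕ} (hf : StrictMonoOn f s)
    (hu : ∀ x ∈ u, x ∈ s) : stdz (u.map f) = stdz u := by
  rw [stdz, List.map_map]
  exact List.map_congr_left fun x hx => by
    rw [Function.comp_apply, List.countP_map_lt_of_strictMonoOn hf hu (hu x hx)]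

theorem bounds_of_mem_stdz {u : List ℕ} {v : ℕ} (hv : v ∈ stdz u) : 1 ≤ v ∧ v ≤ u.length := by
  obtain ⟨x, hx, rfl⟩ := List.mem_map.mp hv
  have hle : u.countP (fun y => decide (y < x)) < u.length :=
    List.countP_lt_length_iff.mpr ⟨x, hx, by simp⟩
  omega

/-- On `1, …, n` this is the cycle `(2 3 ⋯ n 1)`, adding 1 to each letter modulo `n`. -/
def cycSucc (n x : ℕ) : ℕ := x % n + 1

theorem cycSucc_self (n : ℕ) : cycSucc n n = 1 := by simp [cycSucc]

theorem cycSucc_of_lt {n x : ℕ} (h : x < n) : cycSucc n x = x + 1 := by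
  rw [cycSucc, Nat.mod_eq_of_lt h]

theorem cycSucc_eq_ite {n x : ℕ} (h : x ≤ n) : cycSucc n x = if x = n then 1 else x + 1 := by
  split_ifs with hx
  · rw [hx, cycSucc_self]
  · exact cycSucc_of_lt (lt_of_le_of_ne h hx)

theorem strictMonoOn_cycSucc (n : ℕ) : StrictMonoOn (cycSucc n) (Set.Iio n) :=
  fun x hx y hy hxy => by
    rw [cycSucc_of_lt hx, cycSucc_of_lt hy]
    omega

theorem cycSucc_lt_cycSucc_iff {n x y : ℕ} (hx : 1 ≤ x ∧ x ≤ n) (hy : 1 ≤ y ∧ y ≤ n) :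
    cycSucc n y < cycSucc n x ↔ (y < x ∨ y = n) ∧ x ≠ n := by
  rw [cycSucc_eq_ite hx.2, cycSucc_eq_ite hy.2]
  split_ifs <;> omega

theorem injOn_cycSucc (n : ℕ) : Set.InjOn (cycSucc n) (Set.Icc 1 n) := fun x hx y hy h => by
  rw [cycSucc_eq_ite hx.2, cycSucc_eq_ite hy.2] at h
  have := hx.1
  have := hy.1
  split_ifs at h <;> omega

theorem map_cycSucc_range' (n : ℕ) :
    (List.range' 1 n).map (cycSucc n) = (List.range' 1 n).rotate 1 := by
  cases n with
  | zero => rfl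
  | succ k =>
    have hshift : (List.range' 1 k).map (cycSucc (k + 1)) = List.range' 2 k := by
      rw [← List.map_add_range' (a := 1) 1 k 1]
      exact List.map_congr_left fun x hx => by
        rw [cycSucc_of_lt (by have := List.mem_range'_1.mp hx; omega), add_comm]
    conv_lhs => rw [List.range'_1_concat]
    conv_rhs => rw [List.range'_succ]
    simp [hshift, add_comm 1 k, cycSucc_self]

section
variable {n : ℕ}

theorem countP_cycSucc_lt_of_ne {l : List ℕ} (hl : l.Nodup) (hb : ∀ y ∈ l, 1 ≤ y ∧ y ≤ n)
    (hn : n ∈ l) {x : ℕ} (hx : 1 ≤ x ∧ x ≤ n) (hxn : x ≠ n) :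
    l.countP (fun y => decide (cycSucc n y < cycSucc n x)) =
      l.countP (fun y => decide (y < x)) + 1 := by
  rw [← List.countP_or_beq_of_nodup hl hn (by simpa using hx.2)]
  exact List.countP_congr fun y hy => by simp [cycSucc_lt_cycSucc_iff hx (hb y hy), hxn]

theorem stdz_map_cycSucc_of_mem {u : List ℕ} (hu : u.Nodup) (hb : ∀ x ∈ u, 1 ≤ x ∧ x ≤ n)
    (hn : n ∈ u) : stdz (u.map (cycSucc n)) = (stdz u).map (cycSucc u.length) := by
  have hlen : u.countP (fun y => decide (y < n)) + 1 = u.length := by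
    rw [← List.countP_or_beq_of_nodup hu hn (by simp), List.countP_eq_length]
    intro y hy
    have := hb y hy
    simp only [Bool.or_eq_true, decide_eq_true_eq, beq_iff_eq]
    omega
  rw [stdz, stdz, List.map_map, List.map_map]
  refine List.map_congr_left fun x hx => ?_
  simp only [Function.comp_apply, List.countP_map, Function.comp_def]
  rcases eq_or_ne x n with rfl | hxn
  · rw [List.countP_eq_zero.mpr fun y _ => by simp [cycSucc], ← hlen,
      Nat.add_comm 1 (u.countP _), cycSucc_self]
  · have hlt : u.countP (fun y => decide (y < x)) + 1 ≤ u.countP (fun y => decide (y < n)) := by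
      rw [← List.countP_or_beq_of_nodup hu hx (by simp)]
      refine List.countP_mono_left fun y hy => ?_
      have := hb x hx
      simp only [Bool.or_eq_true, decide_eq_true_eq, beq_iff_eq]
      omega
    rw [countP_cycSucc_lt_of_ne hu hb hn (hb x hx) hxn, cycSucc_of_lt (by omega)]
    omega

theorem inv_map_cycSucc : ∀ {w : List ℕ}, w.Nodup → (∀ x ∈ w, 1 ≤ x ∧ x ≤ n) → n ∈ w →
    (inv (w.map (cycSucc n)) : ℤ) = inv w + 2 * w.idxOf n + 1 - w.length
  | a :: l, hw, hb, hn => by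
    obtain ⟨hal, hl⟩ := List.nodup_cons.mp hw
    simp only [List.mem_cons, forall_eq_or_imp] at hb
    rw [List.map_cons, inv_cons, inv_cons, List.countP_map, Function.comp_def]
    rcases eq_or_ne a n with rfl | han
    · have hlt : ∀ y ∈ l, y < a := fun y hy =>
        lt_of_le_of_ne (hb.2 y hy).2 (ne_of_mem_of_not_mem hy hal)
      rw [inv_map_of_strictMonoOn (strictMonoOn_cycSucc a) hlt,
        List.countP_eq_zero.mpr fun y _ => by simp [cycSucc],
        List.countP_eq_length.mpr fun y hy => by simpa using hlt y hy, List.idxOf_cons_self]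
      push_cast [List.length_cons]
      ring
    · have hnl : n ∈ l := (List.mem_cons.mp hn).resolve_left (Ne.symm han)
      rw [countP_cycSucc_lt_of_ne hl hb.2 hnl hb.1 han, List.idxOf_cons_ne _ (by simpa using han)]
      push_cast [List.length_cons]
      rw [inv_map_cycSucc hl hb.2 hnl]
      ring

theorem bounds_of_perm_range' {w : List ℕ} (hw : w.Perm (List.range' 1 n)) :
    ∀ x ∈ w, 1 ≤ x ∧ x ≤ n := fun x hx => by
  have := List.mem_range'_1.mp (hw.subset hx)
  omega

theorem even_inv_map_cycSucc_iff (hn : Even n) (hpos : 0 < n) {w : List ℕ}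
    (hw : w.Perm (List.range' 1 n)) : Even (inv (w.map (cycSucc n))) ↔ ¬Even (inv w) := by
  have hformula := inv_map_cycSucc (hw.nodup_iff.mpr List.nodup_range') (bounds_of_perm_range' hw)
    (hw.mem_iff.mpr (List.mem_range'_1.mpr (by omega)))
  rw [hw.length_eq, List.length_range'] at hformula
  obtain ⟨m, rfl⟩ := hn
  rw [Nat.even_iff, Nat.even_iff]
  omega

theorem isCycShiftB_iff_isRotated (u m : List ℕ) : isCycShiftB u m = true ↔ m.IsRotated u := by
  simp only [isCycShiftB, List.any_eq_true, List.mem_range, beq_iff_eq, List.isRotated_iff_mod,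
    Nat.lt_succ_iff]
  exact exists_congr fun a => and_congr_right fun _ => eq_comm

theorem isRotated_range'_map_cycSucc_iff {p : List ℕ} (hp : ∀ x ∈ p, 1 ≤ x ∧ x ≤ n) :
    (List.range' 1 n).IsRotated (p.map (cycSucc n)) ↔ (List.range' 1 n).IsRotated p := by
  have hrot : ((List.range' 1 n).map (cycSucc n)).IsRotated (List.range' 1 n) := by
    rw [map_cycSucc_range']
    exact List.IsRotated.forall _ 1
  refine ⟨fun h => ?_, fun h => hrot.symm.trans (h.map _)⟩
  refine List.IsRotated.of_map_of_injOn (injOn_cycSucc n) (fun x hx => ?_) hp (hrot.trans h)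
  have := List.mem_range'_1.mp hx
  exact ⟨this.1, by omega⟩

theorem hitAtB_map_cycSucc (c : ℕ) {w : List ℕ} (hw : w.Nodup) (hb : ∀ x ∈ w, 1 ≤ x ∧ x ≤ n)
    (i : ℕ) : hitAtB c (w.map (cycSucc n)) i = hitAtB c w i := by
  rw [hitAtB, hitAtB, List.length_map, ← List.map_drop, ← List.map_take]
  by_cases hic : i + c ≤ w.length
  swap
  · simp only [decide_eq_false hic, Bool.false_and]
  simp only [decide_eq_true hic, Bool.true_and]
  set u := (w.drop i).take c
  have hsub : u.Sublist w := (List.take_sublist _ _).trans (List.drop_sublist _ _)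
  have hbu : ∀ x ∈ u, 1 ≤ x ∧ x ≤ n := fun x hx => hb x (hsub.subset hx)
  have hlen : u.length = c := by simp only [u, List.length_take, List.length_drop]; omega
  by_cases hnu : n ∈ u
  · rw [Bool.eq_iff_iff, isCycShiftB_iff_isRotated, isCycShiftB_iff_isRotated,
      stdz_map_cycSucc_of_mem (hsub.nodup hw) hbu hnu, hlen]
    exact isRotated_range'_map_cycSucc_iff fun v hv => hlen ▸ bounds_of_mem_stdz hv
  · rw [stdz_map_of_strictMonoOn (strictMonoOn_cycSucc n)
      fun x hx => lt_of_le_of_ne (hbu x hx).2 (ne_of_mem_of_not_mem hx hnu)]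

theorem hasHitB_map_cycSucc (c : ℕ) {w : List ℕ} (hw : w.Nodup) (hb : ∀ x ∈ w, 1 ≤ x ∧ x ≤ n) :
    hasHitB c (w.map (cycSucc n)) = hasHitB c w := by
  rw [hasHitB, hasHitB, List.length_map, funext (hitAtB_map_cycSucc c hw hb)]

end

theorem stmt6_general (c n : ℕ) (hne : Even n) (hcn : c < n) :
    (List.range' 1 n).permutations.countP
        (fun w => hasHitB c w && decide (Even (inv w))) =
      (List.range' 1 n).permutations.countP
        (fun w => hasHitB c w && !decide (Even (inv w))) := by
  have hperm : ((List.range' 1 n).permutations.map (List.map (cycSucc n))).Perm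
      (List.range' 1 n).permutations := by
    rw [List.map_permutations, map_cycSucc_range']
    exact (List.rotate_perm _ 1).permutations
  rw [← hperm.countP_eq, List.countP_map]
  refine List.countP_congr fun w hw => ?_
  have hw := List.mem_permutations.mp hw
  simp [hasHitB_map_cycSucc c (hw.nodup_iff.mpr List.nodup_range') (bounds_of_perm_range' hw),
    even_inv_map_cycSucc_iff hne (by omega) hw]

/-- For odd `c ≥ 3` and even `n > c`, the number of even non-avoiders of `S_n` (with respect
to the cyclic shifts of the identity of `S_c`) equals the number of odd non-avoiders. -/
theorem stmt6 (c n : ℕ) (hc : 3 ≤ c) (hco : Odd c) (hne : Even n) (hcn : c < n) :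
    (List.range' 1 n).permutations.countP
        (fun w => hasHitB c w && decide (Even (inv w))) =
      (List.range' 1 n).permutations.countP
        (fun w => hasHitB c w && !decide (Even (inv w))) :=
  stmt6_general c n hne hcn
end
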